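/- Let ξ̂₁,…,ξ̂_N ∈ ℝᵐ, μ ∈ ℝ, ε > 0, and let 𝒳 = { x ∈ ℝᵐ : Σ_{i=1}^m x_i = 1, x_i ≥ 0 for all i }. For x ∈ 𝒳 let P̂^{x}_N = (1/N) Σᵢ δ_{⟨x,ξ̂ᵢ⟩}, let m̂_N = (1/N) Σᵢ ξ̂ᵢ be the sample mean vector, and let Σ̂_N = (1/N) Σᵢ (ξ̂ᵢ − m̂_N)(ξ̂ᵢ − m̂_N)ᵀ be the biased sample covariance matrix. Then inf{ sup{ Var_{ζ∼Q}[ζ] : Q ∈ 𝒫₂(ℝ), W₂(Q, P̂^{x}_N) ≤ ε ‖x‖₂ } : x ∈ 𝒳, inf{ E_{ζ∼Q}[ζ] : Q ∈ 𝒫₂(ℝ), W₂(Q, P̂^{x}_N) ≤ ε ‖x‖₂ } ≥ μ } equals inf{ ( sqrt(⟨x, Σ̂_N x⟩) + ε ‖x‖₂ )² : x ∈ 𝒳, ⟨m̂_N, x⟩ − ε ‖x‖₂ ≥ μ } (both values taken in the extended reals). -/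

import Mathlib

open MeasureTheory
open scoped ENNReal

/-- The `p`-th power transport cost of a coupling `π` with ground cost `d`. -/
noncomputable def transportCost {α : Type*} [MeasurableSpace α]
    (p : ℝ) (d : α → α → ℝ) (π : Measure (α × α)) : ℝ≥0∞ :=
  ∫⁻ w, ENNReal.ofReal (d w.1 w.2 ^ p) ∂π

/-- The `p`-Wasserstein distance between `μ` and `ν` with ground cost `d`:
the infimum of the `p`-th root of the transport cost over all couplings. -/
noncomputable def wassersteinDist {α : Type*} [MeasurableSpace α]
    (p : ℝ) (d : α → α → ℝ) (μ ν : Measure α) : ℝ≥0∞ :=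
  (⨅ (π : Measure (α × α)) (_ : IsProbabilityMeasure π ∧
      π.map Prod.fst = μ ∧ π.map Prod.snd = ν), transportCost p d π) ^ (1 / p)

/-- The empirical distribution of the points `ξ 1, …, ξ N`. -/
noncomputable def empMeasure {α : Type*} [MeasurableSpace α] {N : ℕ}
    (ξ : Fin N → α) : Measure α :=
  (N : ℝ≥0∞)⁻¹ • ∑ i, Measure.dirac (ξ i)
open scoped RealInnerProductSpace

/-- Probability measures on `ℝ` supported on `S`, with finite `p`-th moment, within
`p`-Wasserstein distance (with cost `|·|`) `ε` of `ν`. -/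
def realWassersteinBall (p : ℝ) (S : Set ℝ) (ν : Measure ℝ) (ε : ℝ) : Set (Measure ℝ) :=
  {Q | IsProbabilityMeasure Q ∧ Q Sᶜ = 0 ∧
    (∫⁻ t, ENNReal.ofReal (|t| ^ p) ∂Q) < ⊤ ∧
    wassersteinDist p (fun a b => |a - b|) Q ν ≤ ENNReal.ofReal ε}

/-- The sample mean vector of `ξ 1, …, ξ N`. -/
noncomputable def sampleMean {m N : ℕ} (ξh : Fin N → EuclideanSpace ℝ (Fin m)) :
    Fin m → ℝ :=
  fun j => (1 / (N : ℝ)) * ∑ i, ξh i j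

/-- The biased sample covariance matrix of `ξ 1, …, ξ N`. -/
noncomputable def sampleCov {m N : ℕ} (ξh : Fin N → EuclideanSpace ℝ (Fin m)) :
    Matrix (Fin m) (Fin m) ℝ :=
  fun j k => (1 / (N : ℝ)) * ∑ i, (ξh i j - sampleMean ξh j) * (ξh i k - sampleMean ξh k)

/-!
For a fixed portfolio `x`, the nominal return distribution is the empirical measure `ν` of the
points `⟪x, ξ̂ᵢ⟫`, whose mean is `⟨m̂_N, x⟩` and whose variance is `⟨x, Σ̂_N x⟩`. Gelbrich's bound
says that the quadratic cost of any coupling of `Q` and `ν` dominates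
`(mean Q - mean ν)² + (std Q - std ν)²`; indeed `E(X - Y)² = (EX - EY)² + Var(X - Y)` and
`Var(X - Y) ≥ (std X - std Y)²` by Cauchy–Schwarz for the covariance. Hence on the `W₂`-ball of
radius `δ` around `ν` the mean is at least `mean ν - δ` and the standard deviation at most
`std ν + δ`. Both bounds are attained by empirical measures: shift all atoms by `-δ`, respectively
dilate them about the mean by the factor `1 + δ / std ν` (if `std ν = 0`, split the single atom
into two atoms at distance `δ`). So the inner infimum and supremum have closed forms, and the two
problems have the same feasible portfolios with the same objective values.
-/

namespace ProbabilityTheory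

variable {Ω : Type*} [MeasurableSpace Ω] {μ : Measure Ω} {X Y : Ω → ℝ}

lemma covariance_sq_le_variance_mul_variance [IsFiniteMeasure μ] (hX : MemLp X 2 μ)
    (hY : MemLp Y 2 μ) : cov[X, Y; μ] ^ 2 ≤ Var[X; μ] * Var[Y; μ] := by
  have hquad : ∀ t : ℝ, 0 ≤ Var[X; μ] * (t * t) + (-2 * cov[X, Y; μ]) * t + Var[Y; μ] := by
    intro t
    have := variance_sub (hX.const_smul t) hY
    rw [variance_smul, covariance_smul_left] at this
    linarith [variance_nonneg (t • X - Y) μ]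
  have := discrim_le_zero hquad
  rw [discrim] at this
  linarith

lemma sq_sqrt_variance_sub_sqrt_variance_le [IsFiniteMeasure μ] (hX : MemLp X 2 μ)
    (hY : MemLp Y 2 μ) : (√Var[X; μ] - √Var[Y; μ]) ^ 2 ≤ Var[X - Y; μ] := by
  have hcov : cov[X, Y; μ] ≤ √Var[X; μ] * √Var[Y; μ] := by
    rw [← Real.sqrt_mul (variance_nonneg X μ)]
    exact Real.le_sqrt_of_sq_le (covariance_sq_le_variance_mul_variance hX hY)
  rw [variance_sub hX hY, sub_sq, Real.sq_sqrt (variance_nonneg X μ),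
    Real.sq_sqrt (variance_nonneg Y μ)]
  linarith

lemma sq_integral_sub_add_sq_sqrt_variance_sub_le [IsProbabilityMeasure μ] (hX : MemLp X 2 μ)
    (hY : MemLp Y 2 μ) :
    (μ[X] - μ[Y]) ^ 2 + (√Var[X; μ] - √Var[Y; μ]) ^ 2 ≤ μ[(X - Y) ^ 2] := by
  have h := variance_eq_sub (hX.sub hY)
  rw [integral_sub' (hX.integrable one_le_two) (hY.integrable one_le_two)] at h
  linarith [sq_sqrt_variance_sub_sqrt_variance_le hX hY]

end ProbabilityTheory

open ProbabilityTheory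

lemma transportCost_two_abs_sub (π : Measure (ℝ × ℝ)) :
    transportCost 2 (fun a b => |a - b|) π = ∫⁻ w, ENNReal.ofReal ((w.1 - w.2) ^ 2) ∂π := by
  simp only [transportCost, Real.rpow_two, sq_abs]

lemma memLp_id_two_of_lintegral_lt_top {Q : Measure ℝ}
    (h : ∫⁻ t, ENNReal.ofReal (|t| ^ (2 : ℝ)) ∂Q < ⊤) : MemLp id 2 Q := by
  refine ⟨aestronglyMeasurable_id, ?_⟩
  rw [eLpNorm_eq_lintegral_rpow_enorm_toReal two_ne_zero ENNReal.ofNat_ne_top]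
  have hnorm (t : ℝ) : ‖t‖ₑ ^ (2 : ℝ≥0∞).toReal = ENNReal.ofReal (|t| ^ (2 : ℝ)) := by
    rw [← ofReal_norm, ENNReal.toReal_ofNat,
      ENNReal.ofReal_rpow_of_nonneg (norm_nonneg t) zero_le_two, Real.norm_eq_abs]
  simp only [id_eq, hnorm]
  exact ENNReal.rpow_lt_top_of_nonneg (by norm_num) h.ne

lemma ofReal_sq_integral_sub_add_sq_sqrt_variance_sub_le_transportCost {Q ν : Measure ℝ}
    (hQ : MemLp id 2 Q) (hν : MemLp id 2 ν) {π : Measure (ℝ × ℝ)} [IsProbabilityMeasure π]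
    (h₁ : π.map Prod.fst = Q) (h₂ : π.map Prod.snd = ν) :
    ENNReal.ofReal ((∫ t, t ∂Q - ∫ t, t ∂ν) ^ 2 + (√Var[id; Q] - √Var[id; ν]) ^ 2)
      ≤ transportCost 2 (fun a b => |a - b|) π := by
  subst h₁ h₂
  have hfst : MemLp Prod.fst 2 π := hQ.comp_measurePreserving ⟨measurable_fst, rfl⟩
  have hsnd : MemLp Prod.snd 2 π := hν.comp_measurePreserving ⟨measurable_snd, rfl⟩
  rw [integral_map (f := fun t => t) measurable_fst.aemeasurable aestronglyMeasurable_id,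
    integral_map (f := fun t => t) measurable_snd.aemeasurable aestronglyMeasurable_id,
    variance_id_map measurable_fst.aemeasurable, variance_id_map measurable_snd.aemeasurable,
    transportCost_two_abs_sub]
  calc _ ≤ ENNReal.ofReal (π[((Prod.fst - Prod.snd : ℝ × ℝ → ℝ)) ^ 2]) :=
        ENNReal.ofReal_le_ofReal (sq_integral_sub_add_sq_sqrt_variance_sub_le hfst hsnd)
    _ = _ := ofReal_integral_eq_lintegral_ofReal (hfst.sub hsnd).integrable_sq
        (ae_of_all _ fun _ => sq_nonneg _)

lemma sq_integral_sub_add_sq_sqrt_variance_sub_le_of_wassersteinDist_le {Q ν : Measure ℝ}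
    (hQ : MemLp id 2 Q) (hν : MemLp id 2 ν) {δ : ℝ} (hδ : 0 ≤ δ)
    (hW : wassersteinDist 2 (fun a b => |a - b|) Q ν ≤ ENNReal.ofReal δ) :
    (∫ t, t ∂Q - ∫ t, t ∂ν) ^ 2 + (√Var[id; Q] - √Var[id; ν]) ^ 2 ≤ δ ^ 2 := by
  rw [wassersteinDist, one_div, ENNReal.rpow_inv_le_iff two_pos, ENNReal.rpow_two,
    ← ENNReal.ofReal_pow hδ] at hW
  refine (ENNReal.ofReal_le_ofReal_iff (sq_nonneg δ)).1 (le_trans ?_ hW)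
  exact le_iInf₂ fun π hπ =>
    have := hπ.1
    ofReal_sq_integral_sub_add_sq_sqrt_variance_sub_le_transportCost hQ hν hπ.2.1 hπ.2.2

lemma wassersteinDist_le_transportCost_rpow {α : Type*} [MeasurableSpace α] {p : ℝ}
    (hp : 0 ≤ p) (d : α → α → ℝ) {μ ν : Measure α} {π : Measure (α × α)}
    [IsProbabilityMeasure π] (h₁ : π.map Prod.fst = μ) (h₂ : π.map Prod.snd = ν) :
    wassersteinDist p d μ ν ≤ transportCost p d π ^ (1 / p) :=
  ENNReal.rpow_le_rpow (iInf₂_le π ⟨‹_›, h₁, h₂⟩) (by positivity)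

section EmpiricalMeasure

variable {α : Type*} [MeasurableSpace α] {N : ℕ}

lemma isProbabilityMeasure_empMeasure (hN : 0 < N) (y : Fin N → α) :
    IsProbabilityMeasure (empMeasure y) :=
  ⟨by simp [empMeasure,
    ENNReal.inv_mul_cancel (Nat.cast_ne_zero.2 hN.ne') (ENNReal.natCast_ne_top N)]⟩

lemma map_empMeasure {β : Type*} [MeasurableSpace β] {f : α → β} (hf : Measurable f)
    (y : Fin N → α) : (empMeasure y).map f = empMeasure (f ∘ y) := by
  simp [empMeasure, Measure.map_smul, Measure.map_finset_sum' hf.aemeasurable, hf]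

lemma empMeasure_const (hN : 0 < N) (a : α) :
    empMeasure (fun _ : Fin N => a) = Measure.dirac a := by
  simp [empMeasure, ← Nat.cast_smul_eq_nsmul ℝ≥0∞, smul_smul,
    ENNReal.inv_mul_cancel (Nat.cast_ne_zero.2 hN.ne') (ENNReal.natCast_ne_top N)]

variable [MeasurableSingletonClass α]

lemma lintegral_empMeasure (y : Fin N → α) (f : α → ℝ≥0∞) :
    ∫⁻ a, f a ∂empMeasure y = (N : ℝ≥0∞)⁻¹ * ∑ i, f (y i) := by
  simp [empMeasure]

lemma integral_empMeasure (y : Fin N → α) (f : α → ℝ) :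
    ∫ a, f a ∂empMeasure y = (N : ℝ)⁻¹ * ∑ i, f (y i) := by
  rw [empMeasure, integral_smul_measure, integral_finsetSum_measure fun i _ =>
    integrable_dirac enorm_lt_top]
  simp

lemma lintegral_empMeasure_lt_top (hN : 0 < N) (y : Fin N → α) {f : α → ℝ≥0∞}
    (hf : ∀ a, f a ≠ ⊤) : ∫⁻ a, f a ∂empMeasure y < ⊤ := by
  rw [lintegral_empMeasure]
  exact ENNReal.mul_lt_top (ENNReal.inv_lt_top.2 (Nat.cast_pos.2 hN))
    (ENNReal.sum_lt_top.2 fun i _ => (hf _).lt_top)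

end EmpiricalMeasure

section EmpiricalMeasureReal

variable {N : ℕ}

lemma memLp_id_empMeasure (hN : 0 < N) (y : Fin N → ℝ) : MemLp id 2 (empMeasure y) :=
  memLp_id_two_of_lintegral_lt_top <|
    lintegral_empMeasure_lt_top hN y fun _ => ENNReal.ofReal_ne_top

lemma integral_id_empMeasure (y : Fin N → ℝ) :
    ∫ t, t ∂empMeasure y = (N : ℝ)⁻¹ * ∑ i, y i :=
  integral_empMeasure y id

lemma variance_id_empMeasure (y : Fin N → ℝ) :
    Var[id; empMeasure y] = (N : ℝ)⁻¹ * ∑ i, (y i - ∫ t, t ∂empMeasure y) ^ 2 := by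
  rw [variance_eq_integral aemeasurable_id, integral_empMeasure]
  rfl

lemma empMeasure_mem_realWassersteinBall (hN : 0 < N) {w y : Fin N → ℝ} {δ : ℝ} (hδ : 0 ≤ δ)
    (h : (N : ℝ)⁻¹ * ∑ i, (w i - y i) ^ 2 ≤ δ ^ 2) :
    empMeasure w ∈ realWassersteinBall 2 Set.univ (empMeasure y) δ := by
  refine ⟨isProbabilityMeasure_empMeasure hN w, by simp,
    lintegral_empMeasure_lt_top hN w fun _ => ENNReal.ofReal_ne_top, ?_⟩
  have := isProbabilityMeasure_empMeasure hN fun i => (w i, y i)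
  have h₁ : (empMeasure fun i => (w i, y i)).map Prod.fst = empMeasure w :=
    map_empMeasure measurable_fst _
  have h₂ : (empMeasure fun i => (w i, y i)).map Prod.snd = empMeasure y :=
    map_empMeasure measurable_snd _
  refine (wassersteinDist_le_transportCost_rpow zero_le_two _ h₁ h₂).trans ?_
  rw [one_div, ENNReal.rpow_inv_le_iff two_pos, ENNReal.rpow_two, ← ENNReal.ofReal_pow hδ,
    transportCost_two_abs_sub, lintegral_empMeasure, ← ENNReal.ofReal_natCast,
    ← ENNReal.ofReal_inv_of_pos (Nat.cast_pos.2 hN),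
    ← ENNReal.ofReal_sum_of_nonneg fun i _ => sq_nonneg _,
    ← ENNReal.ofReal_mul (inv_nonneg.2 (Nat.cast_nonneg N))]
  exact ENNReal.ofReal_le_ofReal h

end EmpiricalMeasureReal

section WassersteinBall

variable {N : ℕ} {δ : ℝ}

lemma sq_integral_sub_add_sq_sqrt_variance_sub_le_of_mem_realWassersteinBall {Q ν : Measure ℝ}
    {S : Set ℝ} (hδ : 0 ≤ δ) (hν : MemLp id 2 ν) (hQ : Q ∈ realWassersteinBall 2 S ν δ) :
    (∫ t, t ∂Q - ∫ t, t ∂ν) ^ 2 + (√Var[id; Q] - √Var[id; ν]) ^ 2 ≤ δ ^ 2 :=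
  sq_integral_sub_add_sq_sqrt_variance_sub_le_of_wassersteinDist_le
    (memLp_id_two_of_lintegral_lt_top hQ.2.2.1) hν hδ hQ.2.2.2

lemma integral_sub_le_integral_of_mem_realWassersteinBall {Q ν : Measure ℝ} {S : Set ℝ}
    (hδ : 0 ≤ δ) (hν : MemLp id 2 ν) (hQ : Q ∈ realWassersteinBall 2 S ν δ) :
    ∫ t, t ∂ν - δ ≤ ∫ t, t ∂Q := by
  have := sq_integral_sub_add_sq_sqrt_variance_sub_le_of_mem_realWassersteinBall hδ hν hQ
  nlinarith [sq_nonneg (√Var[id; Q] - √Var[id; ν])]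

lemma variance_le_sq_sqrt_add_of_mem_realWassersteinBall {Q ν : Measure ℝ} {S : Set ℝ}
    (hδ : 0 ≤ δ) (hν : MemLp id 2 ν) (hQ : Q ∈ realWassersteinBall 2 S ν δ) :
    Var[id; Q] ≤ (√Var[id; ν] + δ) ^ 2 := by
  have := sq_integral_sub_add_sq_sqrt_variance_sub_le_of_mem_realWassersteinBall hδ hν hQ
  have hσ : √Var[id; Q] ≤ √Var[id; ν] + δ := by
    nlinarith [sq_nonneg (∫ t, t ∂Q - ∫ t, t ∂ν), Real.sqrt_nonneg Var[id; Q]]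
  calc Var[id; Q] = √Var[id; Q] ^ 2 := (Real.sq_sqrt (variance_nonneg _ _)).symm
    _ ≤ (√Var[id; ν] + δ) ^ 2 := pow_le_pow_left₀ (Real.sqrt_nonneg _) hσ 2

lemma isLeast_integral_realWassersteinBall_empMeasure (hN : 0 < N) (y : Fin N → ℝ)
    (hδ : 0 ≤ δ) :
    IsLeast ((fun Q => ∫ t, t ∂Q) '' realWassersteinBall 2 Set.univ (empMeasure y) δ)
      (∫ t, t ∂empMeasure y - δ) := by
  have hN' : (N : ℝ) ≠ 0 := Nat.cast_ne_zero.2 hN.ne'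
  refine ⟨⟨empMeasure fun i => y i - δ, empMeasure_mem_realWassersteinBall hN hδ ?_, ?_⟩, ?_⟩
  · simp [hN']
  · simp [integral_id_empMeasure, Finset.sum_sub_distrib, mul_sub, hN']
  · rintro _ ⟨Q, hQ, rfl⟩
    exact integral_sub_le_integral_of_mem_realWassersteinBall hδ (memLp_id_empMeasure hN y) hQ

lemma eq_integral_of_variance_id_empMeasure_eq_zero (y : Fin N → ℝ)
    (h : Var[id; empMeasure y] = 0) (i : Fin N) : y i = ∫ t, t ∂empMeasure y := by
  have hN : (N : ℝ) ≠ 0 := Nat.cast_ne_zero.2 (Fin.pos i).ne'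
  rw [variance_id_empMeasure, mul_eq_zero, inv_eq_zero, Finset.sum_eq_zero_iff_of_nonneg
    fun _ _ => sq_nonneg _] at h
  simp only [hN, false_or, Finset.mem_univ, pow_eq_zero_iff two_ne_zero, sub_eq_zero,
    forall_const] at h
  exact h i

lemma exists_mem_realWassersteinBall_variance_eq_of_variance_eq_zero (hN : 0 < N)
    (y : Fin N → ℝ) (hδ : 0 ≤ δ) (h : Var[id; empMeasure y] = 0) :
    ∃ Q ∈ realWassersteinBall 2 Set.univ (empMeasure y) δ, Var[id; Q] = δ ^ 2 := by
  set M := ∫ t, t ∂empMeasure y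
  have hy : y = fun _ => M := funext (eq_integral_of_variance_id_empMeasure_eq_zero y h)
  have hν : empMeasure y = empMeasure ![M, M] := by
    rw [hy, empMeasure_const hN, ← empMeasure_const two_pos M]
    congr 1
    ext i; fin_cases i <;> rfl
  refine ⟨empMeasure ![M + δ, M - δ],
    hν ▸ empMeasure_mem_realWassersteinBall two_pos hδ (le_of_eq ?_), ?_⟩
  · simp [Fin.sum_univ_two]
    ring
  · simp [variance_id_empMeasure, integral_id_empMeasure, Fin.sum_univ_two]
    ring

lemma exists_mem_realWassersteinBall_variance_eq_of_variance_pos (hN : 0 < N)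
    (y : Fin N → ℝ) (hδ : 0 ≤ δ) (h : 0 < Var[id; empMeasure y]) :
    ∃ Q ∈ realWassersteinBall 2 Set.univ (empMeasure y) δ,
      Var[id; Q] = (√Var[id; empMeasure y] + δ) ^ 2 := by
  have := isProbabilityMeasure_empMeasure hN y
  set M := ∫ t, t ∂empMeasure y
  set σ := √Var[id; empMeasure y]
  have hσ : σ ≠ 0 := (Real.sqrt_pos.2 h).ne'
  have hVar : Var[id; empMeasure y] = σ ^ 2 := (Real.sq_sqrt (variance_nonneg _ _)).symm
  have hV : Var[id; empMeasure y] = (N : ℝ)⁻¹ * ∑ i, (y i - M) ^ 2 := variance_id_empMeasure y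
  have hshift : Var[fun t => t - M; empMeasure y] = Var[id; empMeasure y] :=
    variance_sub_const aestronglyMeasurable_id M
  set f : ℝ → ℝ := fun t => M + (1 + δ / σ) * (t - M)
  have hf : Measurable f := by fun_prop
  refine ⟨empMeasure (f ∘ y), empMeasure_mem_realWassersteinBall hN hδ (le_of_eq ?_), ?_⟩
  · calc (N : ℝ)⁻¹ * ∑ i, ((f ∘ y) i - y i) ^ 2 = (δ / σ) ^ 2 * Var[id; empMeasure y] := by
          simp only [hV, Finset.mul_sum]
          exact Finset.sum_congr rfl fun i _ => by simp only [f, Function.comp_apply]; ring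
      _ = δ ^ 2 := by rw [hVar]; field_simp
  · rw [← map_empMeasure hf, variance_id_map hf.aemeasurable,
      variance_const_add (by fun_prop), variance_const_mul, hshift, hVar]
    field_simp

lemma isGreatest_variance_realWassersteinBall_empMeasure (hN : 0 < N) (y : Fin N → ℝ)
    (hδ : 0 ≤ δ) :
    IsGreatest ((fun Q => Var[id; Q]) '' realWassersteinBall 2 Set.univ (empMeasure y) δ)
      ((√Var[id; empMeasure y] + δ) ^ 2) := by
  refine ⟨?_, ?_⟩
  · rcases (variance_nonneg id (empMeasure y)).eq_or_lt with h | h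
    · obtain ⟨Q, hQ, hVar⟩ :=
        exists_mem_realWassersteinBall_variance_eq_of_variance_eq_zero hN y hδ h.symm
      exact ⟨Q, hQ, by simp [hVar, ← h]⟩
    · exact exists_mem_realWassersteinBall_variance_eq_of_variance_pos hN y hδ h
  · rintro _ ⟨Q, hQ, rfl⟩
    exact variance_le_sq_sqrt_add_of_mem_realWassersteinBall hδ (memLp_id_empMeasure hN y) hQ

lemma sInf_integral_realWassersteinBall_empMeasure (hN : 0 < N) (y : Fin N → ℝ)
    (hδ : 0 ≤ δ) :
    sInf ((fun Q : Measure ℝ => ((∫ t, t ∂Q : ℝ) : EReal)) ''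
        realWassersteinBall 2 Set.univ (empMeasure y) δ)
      = ((∫ t, t ∂empMeasure y - δ : ℝ) : EReal) := by
  rw [← Set.image_image (g := Real.toEReal) (f := fun Q => ∫ t, t ∂Q)]
  exact (EReal.coe_strictMono.monotone.map_isLeast
    (isLeast_integral_realWassersteinBall_empMeasure hN y hδ)).csInf_eq

lemma sSup_variance_realWassersteinBall_empMeasure (hN : 0 < N) (y : Fin N → ℝ)
    (hδ : 0 ≤ δ) :
    sSup ((fun Q : Measure ℝ => ((Var[id; Q] : ℝ) : EReal)) ''
        realWassersteinBall 2 Set.univ (empMeasure y) δ)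
      = (((√Var[id; empMeasure y] + δ) ^ 2 : ℝ) : EReal) := by
  rw [← Set.image_image (g := Real.toEReal) (f := fun Q => Var[id; Q])]
  exact (EReal.coe_strictMono.monotone.map_isGreatest
    (isGreatest_variance_realWassersteinBall_empMeasure hN y hδ)).csSup_eq

end WassersteinBall

section Portfolio

variable {m N : ℕ} (ξh : Fin N → EuclideanSpace ℝ (Fin m)) (x : EuclideanSpace ℝ (Fin m))

lemma inner_eq_sum_mul (v : EuclideanSpace ℝ (Fin m)) : ⟪x, v⟫ = ∑ j, x j * v j := by
  simp [PiLp.inner_apply, mul_comm]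

lemma integral_id_empMeasure_inner :
    ∫ t, t ∂empMeasure (fun i => ⟪x, ξh i⟫) = ∑ j, sampleMean ξh j * x j := by
  simp only [integral_id_empMeasure, inner_eq_sum_mul, sampleMean, Finset.mul_sum, Finset.sum_mul]
  rw [Finset.sum_comm]
  exact Finset.sum_congr rfl fun j _ => Finset.sum_congr rfl fun i _ => by ring

lemma variance_id_empMeasure_inner :
    Var[id; empMeasure fun i => ⟪x, ξh i⟫] = ∑ j, ∑ k, x j * sampleCov ξh j k * x k := by
  have hcentered (i : Fin N) : ⟪x, ξh i⟫ - ∑ j, sampleMean ξh j * x j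
      = ∑ j, x j * (ξh i j - sampleMean ξh j) := by
    rw [inner_eq_sum_mul, ← Finset.sum_sub_distrib]
    exact Finset.sum_congr rfl fun j _ => by ring
  rw [variance_id_empMeasure, integral_id_empMeasure_inner]
  simp only [hcentered, sq, Finset.mul_sum, sampleCov, Finset.sum_mul]
  rw [Finset.sum_comm]
  refine Finset.sum_congr rfl fun j _ => ?_
  rw [Finset.sum_comm]
  exact Finset.sum_congr rfl fun k _ => Finset.sum_congr rfl fun i _ => by ring

end Portfolio

/-- The decision-dependent Wasserstein DRO Markowitz mean-variance portfolio
problem and its second-order-cone reformulation. -/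
theorem statement12 {m N : ℕ} (hN : 0 < N)
    (ξh : Fin N → EuclideanSpace ℝ (Fin m))
    (μ : ℝ) (ε : ℝ) (hε : 0 < ε) :
    sInf {v : EReal | ∃ x : EuclideanSpace ℝ (Fin m),
        (∑ i, x i) = 1 ∧ (∀ i, 0 ≤ x i) ∧
        ((μ : EReal) ≤ sInf ((fun Q : Measure ℝ => ((∫ t, t ∂Q : ℝ) : EReal)) ''
          realWassersteinBall 2 Set.univ
            (empMeasure fun i => ⟪x, ξh i⟫) (ε * ‖x‖))) ∧
        v = sSup ((fun Q : Measure ℝ => ((ProbabilityTheory.variance id Q : ℝ) : EReal)) ''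
          realWassersteinBall 2 Set.univ
            (empMeasure fun i => ⟪x, ξh i⟫) (ε * ‖x‖))} =
    sInf {v : EReal | ∃ x : EuclideanSpace ℝ (Fin m),
        (∑ i, x i) = 1 ∧ (∀ i, 0 ≤ x i) ∧
        (μ ≤ (∑ j, sampleMean ξh j * x j) - ε * ‖x‖) ∧
        v = (((Real.sqrt (∑ j, ∑ k, x j * sampleCov ξh j k * x k) + ε * ‖x‖) ^ 2 : ℝ) :
          EReal)} := by
  congr 1
  ext v
  refine exists_congr fun x => ?_
  have hδ : 0 ≤ ε * ‖x‖ := by positivity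
  rw [sInf_integral_realWassersteinBall_empMeasure hN _ hδ,
    sSup_variance_realWassersteinBall_empMeasure hN _ hδ, integral_id_empMeasure_inner,
    variance_id_empMeasure_inner, EReal.coe_le_coe_iff]
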